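/- The rule ∀I' (from A(c/x) with c fresh infer ∀xA) together with the standard positive and negated quantifier rules does not suffice to derive ∀x(B ∨ A) ⊢ B ∨ ∀xA (x not free in B): there is a cut-free sequent calculus for the constructive first-order FDE (the →-free fragment of López-Escobar's refutability calculus) in which every formula in a cut-free derivation is a generalized subformula of the endsequent, and no cut-free proof of ∀x(B ∨ A) ⇒ B ∨ ∀xA exists. -/

import Mathlib

set_option autoImplicit true
set_option relaxedAutoImplicit true

namespace QLETF

/-- Formulas of a first-order language with a classicality operator `cl` (∘),
a non-classicality operator `ncl` (•), identity `eq`, over a type `K` of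
individual constants.  Terms are `ℕ ⊕ K`: `Sum.inl n` is the variable `vₙ`,
`Sum.inr c` is the constant `c`.  Predicate letters are indexed by `ℕ`. -/
inductive Fm (K : Type) : Type where
  | pred : ℕ → List (ℕ ⊕ K) → Fm K
  | eq   : (ℕ ⊕ K) → (ℕ ⊕ K) → Fm K
  | neg  : Fm K → Fm K
  | conj : Fm K → Fm K → Fm K
  | disj : Fm K → Fm K → Fm K
  | cl   : Fm K → Fm K
  | ncl  : Fm K → Fm K
  | all  : ℕ → Fm K → Fm K
  | ex   : ℕ → Fm K → Fm K

variable {K K' : Type}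

/-- Substitution on terms: replace the variable `x` by the term `t`. -/
def substT (x : ℕ) (t : ℕ ⊕ K) : (ℕ ⊕ K) → (ℕ ⊕ K)
  | .inl y => if y = x then t else .inl y
  | .inr c => .inr c

/-- `subst x t A` replaces every free occurrence of the variable `x` in `A` by `t`. -/
def subst (x : ℕ) (t : ℕ ⊕ K) : Fm K → Fm K
  | .pred n ts => .pred n (ts.map (substT x t))
  | .eq a b    => .eq (substT x t a) (substT x t b)
  | .neg A     => .neg (subst x t A)
  | .conj A B  => .conj (subst x t A) (subst x t B)
  | .disj A B  => .disj (subst x t A) (subst x t B)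
  | .cl A      => .cl (subst x t A)
  | .ncl A     => .ncl (subst x t A)
  | .all y A   => if y = x then .all y A else .all y (subst x t A)
  | .ex y A    => if y = x then .ex y A else .ex y (subst x t A)

/-- The set of free variables of a formula. -/
def fv : Fm K → Set ℕ
  | .pred _ ts => {y | Sum.inl y ∈ ts}
  | .eq a b    => {y | a = Sum.inl y ∨ b = Sum.inl y}
  | .neg A     => fv A
  | .conj A B  => fv A ∪ fv B
  | .disj A B  => fv A ∪ fv B
  | .cl A      => fv A
  | .ncl A     => fv A
  | .all y A   => fv A \ {y}
  | .ex y A    => fv A \ {y}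

/-- The set of all (free or bound) variables occurring in a formula. -/
def vars : Fm K → Set ℕ
  | .pred _ ts => {y | Sum.inl y ∈ ts}
  | .eq a b    => {y | a = Sum.inl y ∨ b = Sum.inl y}
  | .neg A     => vars A
  | .conj A B  => vars A ∪ vars B
  | .disj A B  => vars A ∪ vars B
  | .cl A      => vars A
  | .ncl A     => vars A
  | .all y A   => insert y (vars A)
  | .ex y A    => insert y (vars A)

/-- The constant `c` occurs in the formula. -/
def cOcc (c : K) : Fm K → Prop
  | .pred _ ts => Sum.inr c ∈ ts
  | .eq a b    => a = Sum.inr c ∨ b = Sum.inr c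
  | .neg A     => cOcc c A
  | .conj A B  => cOcc c A ∨ cOcc c B
  | .disj A B  => cOcc c A ∨ cOcc c B
  | .cl A      => cOcc c A
  | .ncl A     => cOcc c A
  | .all _ A   => cOcc c A
  | .ex _ A    => cOcc c A

/-- A sentence is a formula with no free variables. -/
def Closed (A : Fm K) : Prop := fv A = ∅

/-- The formula contains no occurrence of the operators ∘ and •. -/
def clFree : Fm K → Prop
  | .pred _ _ => True
  | .eq _ _   => True
  | .neg A    => clFree A
  | .conj A B => clFree A ∧ clFree B
  | .disj A B => clFree A ∧ clFree B
  | .cl _     => False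
  | .ncl _    => False
  | .all _ A  => clFree A
  | .ex _ A   => clFree A

/-- Alphabetic variance: the least equivalence relation, compatible with the
connectives, that allows renaming a bound variable to a fresh one. -/
inductive Alpha : Fm K → Fm K → Prop
  | refl (A : Fm K) : Alpha A A
  | symm : Alpha A B → Alpha B A
  | trans : Alpha A B → Alpha B C → Alpha A C
  | negC : Alpha A B → Alpha (.neg A) (.neg B)
  | conjC : Alpha A A' → Alpha B B' → Alpha (.conj A B) (.conj A' B')
  | disjC : Alpha A A' → Alpha B B' → Alpha (.disj A B) (.disj A' B')
  | clC : Alpha A B → Alpha (.cl A) (.cl B)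
  | nclC : Alpha A B → Alpha (.ncl A) (.ncl B)
  | allC : Alpha A B → Alpha (.all x A) (.all x B)
  | exC : Alpha A B → Alpha (.ex x A) (.ex x B)
  | allR (x y : ℕ) (A : Fm K) : y ∉ vars A →
      Alpha (.all x A) (.all y (subst x (Sum.inl y) A))
  | exR (x y : ℕ) (A : Fm K) : y ∉ vars A →
      Alpha (.ex x A) (.ex y (subst x (Sum.inl y) A))

/-- The natural deduction system QLET_F (sequent-style: `Deriv Γ A` means that
`A` is derivable from the set of hypotheses `Γ`). -/
inductive Deriv : Set (Fm K) → Fm K → Prop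
  | hyp : A ∈ Γ → Deriv Γ A
  | andI : Deriv Γ A → Deriv Γ B → Deriv Γ (.conj A B)
  | andE1 : Deriv Γ (.conj A B) → Deriv Γ A
  | andE2 : Deriv Γ (.conj A B) → Deriv Γ B
  | orI1 : Deriv Γ A → Deriv Γ (.disj A B)
  | orI2 : Deriv Γ B → Deriv Γ (.disj A B)
  | orE : Deriv Γ (.disj A B) → Deriv (insert A Γ) C → Deriv (insert B Γ) C → Deriv Γ C
  | negAndI1 : Deriv Γ (.neg A) → Deriv Γ (.neg (.conj A B))
  | negAndI2 : Deriv Γ (.neg B) → Deriv Γ (.neg (.conj A B))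
  | negAndE : Deriv Γ (.neg (.conj A B)) → Deriv (insert (.neg A) Γ) C →
      Deriv (insert (.neg B) Γ) C → Deriv Γ C
  | negOrI : Deriv Γ (.neg A) → Deriv Γ (.neg B) → Deriv Γ (.neg (.disj A B))
  | negOrE1 : Deriv Γ (.neg (.disj A B)) → Deriv Γ (.neg A)
  | negOrE2 : Deriv Γ (.neg (.disj A B)) → Deriv Γ (.neg B)
  | dnI : Deriv Γ A → Deriv Γ (.neg (.neg A))
  | dnE : Deriv Γ (.neg (.neg A)) → Deriv Γ A
  | expO : Deriv Γ (.cl A) → Deriv Γ A → Deriv Γ (.neg A) → Deriv Γ B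
  | pemO : Deriv Γ (.cl A) → Deriv Γ (.disj A (.neg A))
  | consR : Deriv Γ (.cl A) → Deriv Γ (.ncl A) → Deriv Γ B
  | compR : Deriv Γ (.disj (.cl A) (.ncl A))
  | allI : Deriv Γ (.disj B (subst x (Sum.inr c) A)) → ¬ cOcc c A → ¬ cOcc c B →
      (∀ G ∈ Γ, ¬ cOcc c G) → Deriv Γ (.disj B (.all x A))
  | allE : Deriv Γ (.all x A) → Deriv Γ (subst x (Sum.inr c) A)
  | exI : Deriv Γ (subst x (Sum.inr c) A) → Deriv Γ (.ex x A)
  | exE : Deriv Γ (.ex x A) → Deriv (insert (subst x (Sum.inr c) A) Γ) C →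
      ¬ cOcc c A → ¬ cOcc c C → (∀ G ∈ Γ, ¬ cOcc c G) → Deriv Γ C
  | negAllI : Deriv Γ (.neg (subst x (Sum.inr c) A)) → Deriv Γ (.neg (.all x A))
  | negAllE : Deriv Γ (.neg (.all x A)) → Deriv (insert (.neg (subst x (Sum.inr c) A)) Γ) C →
      ¬ cOcc c A → ¬ cOcc c C → (∀ G ∈ Γ, ¬ cOcc c G) → Deriv Γ C
  | negExI : Deriv Γ (.neg (subst x (Sum.inr c) A)) → ¬ cOcc c A →
      (∀ G ∈ Γ, ¬ cOcc c G) → Deriv Γ (.neg (.ex x A))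
  | negExE : Deriv Γ (.neg (.ex x A)) → Deriv Γ (.neg (subst x (Sum.inr c) A))
  | eqI : Deriv Γ (.eq (Sum.inr c) (Sum.inr c))
  | eqE : Deriv Γ (.eq (Sum.inr c₁) (Sum.inr c₂)) → Deriv Γ (subst x (Sum.inr c₁) A) →
      Deriv Γ (subst x (Sum.inr c₂) A)
  | av : Deriv Γ A → Alpha A A' → Deriv Γ A'

/-- An S-structure: each constant denotes an element of the domain `D`, each
predicate letter gets an extension `Pplus` and an anti-extension `Pminus`;
the extension of identity is fixed as the diagonal, its anti-extension
`eqMinus` is arbitrary. -/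
structure Struc (C D : Type) where
  cI : C → D
  Pplus : ℕ → List D → Prop
  Pminus : ℕ → List D → Prop
  eqMinus : D → D → Prop

variable {C D : Type}

/-- Denotation of a constant of the diagram language (`C ⊕ D`): a diagram
constant `ā` (for `a : D`) denotes `a` itself. -/
def den (S : Struc C D) : C ⊕ D → D := Sum.elim S.cI id

/-- Clauses (1)-(7) and (10)-(13) of the valuation definition: the clauses
for atomic and negated atomic sentences, ∧, ∨, De Morgan negations,
double negation, and the substitutional quantifier clauses. -/
structure ValCore (S : Struc C D) (v : Fm (C ⊕ D) → Bool) : Prop where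
  atom : ∀ (n : ℕ) (cs : List (C ⊕ D)),
    v (.pred n (cs.map Sum.inr)) = true ↔ S.Pplus n (cs.map (den S))
  natom : ∀ (n : ℕ) (cs : List (C ⊕ D)),
    v (.neg (.pred n (cs.map Sum.inr))) = true ↔ S.Pminus n (cs.map (den S))
  eqP : ∀ a b : C ⊕ D, v (.eq (Sum.inr a) (Sum.inr b)) = true ↔ den S a = den S b
  eqN : ∀ a b : C ⊕ D, v (.neg (.eq (Sum.inr a) (Sum.inr b))) = true ↔
    S.eqMinus (den S a) (den S b)
  andC : ∀ A B, Closed A → Closed B →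
    (v (.conj A B) = true ↔ v A = true ∧ v B = true)
  orC : ∀ A B, Closed A → Closed B →
    (v (.disj A B) = true ↔ v A = true ∨ v B = true)
  nandC : ∀ A B, Closed A → Closed B →
    (v (.neg (.conj A B)) = true ↔ v (.neg A) = true ∨ v (.neg B) = true)
  norC : ∀ A B, Closed A → Closed B →
    (v (.neg (.disj A B)) = true ↔ v (.neg A) = true ∧ v (.neg B) = true)
  dnC : ∀ A, Closed A → v (.neg (.neg A)) = v A
  allC : ∀ (x : ℕ) (A : Fm (C ⊕ D)), fv A ⊆ {x} →
    (v (.all x A) = true ↔ ∀ d : D, v (subst x (Sum.inr (Sum.inr d)) A) = true)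
  exC : ∀ (x : ℕ) (A : Fm (C ⊕ D)), fv A ⊆ {x} →
    (v (.ex x A) = true ↔ ∃ d : D, v (subst x (Sum.inr (Sum.inr d)) A) = true)
  nallC : ∀ (x : ℕ) (A : Fm (C ⊕ D)), fv A ⊆ {x} →
    (v (.neg (.all x A)) = true ↔ ∃ d : D, v (.neg (subst x (Sum.inr (Sum.inr d)) A)) = true)
  nexC : ∀ (x : ℕ) (A : Fm (C ⊕ D)), fv A ⊆ {x} →
    (v (.neg (.ex x A)) = true ↔ ∀ d : D, v (.neg (subst x (Sum.inr (Sum.inr d)) A)) = true)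

/-- An 𝔄-valuation for QLET_F: the determined clauses together with clauses
(8), (9), (14) (alphabetic variants) and (15). -/
structure IsVal (S : Struc C D) (v : Fm (C ⊕ D) → Bool) extends ValCore S v : Prop where
  clC : ∀ A, Closed A → v (.cl A) = true → (v A = true ↔ v (.neg A) = false)
  compC : ∀ A, Closed A → (v (.cl A) = true ↔ v (.ncl A) = false)
  avC : ∀ A A', Closed A → Alpha A A' → v A = v A'
  substC : ∀ (x : ℕ) (A : Fm (C ⊕ D)), fv A ⊆ {x} → ∀ c₁ c₂ : C ⊕ D,
    den S c₁ = den S c₂ →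
    v (subst x (Sum.inr c₁) A) = v (subst x (Sum.inr c₂) A) →
    (v (.neg (subst x (Sum.inr c₁) A)) = v (.neg (subst x (Sum.inr c₂) A)) ∧
     v (.cl (subst x (Sum.inr c₁) A)) = v (.cl (subst x (Sum.inr c₂) A)) ∧
     v (.ncl (subst x (Sum.inr c₁) A)) = v (.ncl (subst x (Sum.inr c₂) A)))

/-- Map a formula along a renaming of its constants (used to embed the base
language into the diagram language). -/
def Fm.map (f : K → K') : Fm K → Fm K'
  | .pred n ts => .pred n (ts.map (Sum.map id f))
  | .eq a b    => .eq (Sum.map id f a) (Sum.map id f b)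
  | .neg A     => .neg (Fm.map f A)
  | .conj A B  => .conj (Fm.map f A) (Fm.map f B)
  | .disj A B  => .disj (Fm.map f A) (Fm.map f B)
  | .cl A      => .cl (Fm.map f A)
  | .ncl A     => .ncl (Fm.map f A)
  | .all y A   => .all y (Fm.map f A)
  | .ex y A    => .ex y (Fm.map f A)

/-- A sentence of the base language holds in the interpretation ⟨S, v⟩. -/
def Sat (S : Struc C D) (v : Fm (C ⊕ D) → Bool) (A : Fm C) : Prop :=
  v (A.map Sum.inl) = true

/-- Semantic consequence: every interpretation making all of Γ hold makes A hold. -/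
def SemCons (Γ : Set (Fm C)) (A : Fm C) : Prop :=
  ∀ (D : Type) (S : Struc C D) (v : Fm (C ⊕ D) → Bool), Nonempty D → IsVal S v →
    (∀ B ∈ Γ, Sat S v B) → Sat S v A

/-- Γ has a model. -/
def HasModel (Γ : Set (Fm C)) : Prop :=
  ∃ (D : Type) (S : Struc C D) (v : Fm (C ⊕ D) → Bool),
    Nonempty D ∧ IsVal S v ∧ ∀ B ∈ Γ, Sat S v B

/-- Henkin set: Δ proves an existential iff it proves some instance, and a
universal iff it proves every instance. -/
def Henkin (Δ : Set (Fm K)) : Prop :=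
  ∀ (x : ℕ) (B : Fm K),
    (Deriv Δ (.ex x B) ↔ ∃ c : K, Deriv Δ (subst x (Sum.inr c) B)) ∧
    (Deriv Δ (.all x B) ↔ ∀ c : K, Deriv Δ (subst x (Sum.inr c) B))

/-- Regular set: non-trivial, deductively closed, and disjunctive. -/
def Regular (Δ : Set (Fm K)) : Prop :=
  (∃ A, ¬ Deriv Δ A) ∧ (∀ A, Deriv Δ A → A ∈ Δ) ∧
  (∀ A B, Deriv Δ (.disj A B) → Deriv Δ A ∨ Deriv Δ B)

end QLETF

namespace FDE
open QLETF

/-- The natural deduction system QFDE, optionally extended by PEM (giving QLP),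
by EXP (giving QK3), or by both (giving QCL).  `FDeriv pem exp Γ A` is
derivability of `A` from `Γ` in the corresponding system. -/
inductive FDeriv {K : Type} (pem exp : Prop) : Set (Fm K) → Fm K → Prop
  | hyp : A ∈ Γ → FDeriv pem exp Γ A
  | andI : FDeriv pem exp Γ A → FDeriv pem exp Γ B → FDeriv pem exp Γ (.conj A B)
  | andE1 : FDeriv pem exp Γ (.conj A B) → FDeriv pem exp Γ A
  | andE2 : FDeriv pem exp Γ (.conj A B) → FDeriv pem exp Γ B
  | orI1 : FDeriv pem exp Γ A → FDeriv pem exp Γ (.disj A B)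
  | orI2 : FDeriv pem exp Γ B → FDeriv pem exp Γ (.disj A B)
  | orE : FDeriv pem exp Γ (.disj A B) → FDeriv pem exp (insert A Γ) C →
      FDeriv pem exp (insert B Γ) C → FDeriv pem exp Γ C
  | negAndI1 : FDeriv pem exp Γ (.neg A) → FDeriv pem exp Γ (.neg (.conj A B))
  | negAndI2 : FDeriv pem exp Γ (.neg B) → FDeriv pem exp Γ (.neg (.conj A B))
  | negAndE : FDeriv pem exp Γ (.neg (.conj A B)) → FDeriv pem exp (insert (.neg A) Γ) C →
      FDeriv pem exp (insert (.neg B) Γ) C → FDeriv pem exp Γ C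
  | negOrI : FDeriv pem exp Γ (.neg A) → FDeriv pem exp Γ (.neg B) →
      FDeriv pem exp Γ (.neg (.disj A B))
  | negOrE1 : FDeriv pem exp Γ (.neg (.disj A B)) → FDeriv pem exp Γ (.neg A)
  | negOrE2 : FDeriv pem exp Γ (.neg (.disj A B)) → FDeriv pem exp Γ (.neg B)
  | dnI : FDeriv pem exp Γ A → FDeriv pem exp Γ (.neg (.neg A))
  | dnE : FDeriv pem exp Γ (.neg (.neg A)) → FDeriv pem exp Γ A
  | allI : FDeriv pem exp Γ (.disj B (subst x (Sum.inr c) A)) → ¬ cOcc c A → ¬ cOcc c B →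
      (∀ G ∈ Γ, ¬ cOcc c G) → FDeriv pem exp Γ (.disj B (.all x A))
  | allE : FDeriv pem exp Γ (.all x A) → FDeriv pem exp Γ (subst x (Sum.inr c) A)
  | exI : FDeriv pem exp Γ (subst x (Sum.inr c) A) → FDeriv pem exp Γ (.ex x A)
  | exE : FDeriv pem exp Γ (.ex x A) → FDeriv pem exp (insert (subst x (Sum.inr c) A) Γ) C →
      ¬ cOcc c A → ¬ cOcc c C → (∀ G ∈ Γ, ¬ cOcc c G) → FDeriv pem exp Γ C
  | negAllI : FDeriv pem exp Γ (.neg (subst x (Sum.inr c) A)) →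
      FDeriv pem exp Γ (.neg (.all x A))
  | negAllE : FDeriv pem exp Γ (.neg (.all x A)) →
      FDeriv pem exp (insert (.neg (subst x (Sum.inr c) A)) Γ) C →
      ¬ cOcc c A → ¬ cOcc c C → (∀ G ∈ Γ, ¬ cOcc c G) → FDeriv pem exp Γ C
  | negExI : FDeriv pem exp Γ (.neg (subst x (Sum.inr c) A)) → ¬ cOcc c A →
      (∀ G ∈ Γ, ¬ cOcc c G) → FDeriv pem exp Γ (.neg (.ex x A))
  | negExE : FDeriv pem exp Γ (.neg (.ex x A)) → FDeriv pem exp Γ (.neg (subst x (Sum.inr c) A))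
  | eqI : FDeriv pem exp Γ (.eq (Sum.inr c) (Sum.inr c))
  | eqE : FDeriv pem exp Γ (.eq (Sum.inr c₁) (Sum.inr c₂)) →
      FDeriv pem exp Γ (subst x (Sum.inr c₁) A) → FDeriv pem exp Γ (subst x (Sum.inr c₂) A)
  | pemR : pem → FDeriv pem exp Γ (.disj A (.neg A))
  | expR : exp → FDeriv pem exp Γ A → FDeriv pem exp Γ (.neg A) → FDeriv pem exp Γ B

/-- QLP-structures: extension and anti-extension of every predicate letter
(including identity) jointly cover the appropriate power of the domain. -/
def CoverS {C D : Type} (S : Struc C D) : Prop :=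
  (∀ (n : ℕ) (ds : List D), S.Pplus n ds ∨ S.Pminus n ds) ∧
  (∀ a b : D, a = b ∨ S.eqMinus a b)

/-- QK3-structures: extension and anti-extension of every predicate letter
(including identity) are disjoint. -/
def DisjS {C D : Type} (S : Struc C D) : Prop :=
  (∀ (n : ℕ) (ds : List D), ¬ (S.Pplus n ds ∧ S.Pminus n ds)) ∧
  (∀ a : D, ¬ S.eqMinus a a)

/-- Semantic consequence over the class of structures satisfying `cond`,
with the induced (determined) QFDE valuations. -/
def SemConsF {C : Type} (cond : ∀ D : Type, Struc C D → Prop)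
    (Γ : Set (Fm C)) (A : Fm C) : Prop :=
  ∀ (D : Type) (S : Struc C D) (v : Fm (C ⊕ D) → Bool), Nonempty D → cond D S →
    ValCore S v → (∀ B ∈ Γ, Sat S v B) → Sat S v A

end FDE

namespace S17
open QLETF FDE

/-- QFDE′: quantified FDE whose universal introduction rule is the usual
∀I′ (from `A(c/x)`, `c` fresh, infer `∀xA`) instead of the restricted
disjunctive rule ∀I. -/
inductive FDerivP {K : Type} : Set (Fm K) → Fm K → Prop
  | hyp : A ∈ Γ → FDerivP Γ A
  | andI : FDerivP Γ A → FDerivP Γ B → FDerivP Γ (.conj A B)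
  | andE1 : FDerivP Γ (.conj A B) → FDerivP Γ A
  | andE2 : FDerivP Γ (.conj A B) → FDerivP Γ B
  | orI1 : FDerivP Γ A → FDerivP Γ (.disj A B)
  | orI2 : FDerivP Γ B → FDerivP Γ (.disj A B)
  | orE : FDerivP Γ (.disj A B) → FDerivP (insert A Γ) C → FDerivP (insert B Γ) C → FDerivP Γ C
  | negAndI1 : FDerivP Γ (.neg A) → FDerivP Γ (.neg (.conj A B))
  | negAndI2 : FDerivP Γ (.neg B) → FDerivP Γ (.neg (.conj A B))
  | negAndE : FDerivP Γ (.neg (.conj A B)) → FDerivP (insert (.neg A) Γ) C →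
      FDerivP (insert (.neg B) Γ) C → FDerivP Γ C
  | negOrI : FDerivP Γ (.neg A) → FDerivP Γ (.neg B) → FDerivP Γ (.neg (.disj A B))
  | negOrE1 : FDerivP Γ (.neg (.disj A B)) → FDerivP Γ (.neg A)
  | negOrE2 : FDerivP Γ (.neg (.disj A B)) → FDerivP Γ (.neg B)
  | dnI : FDerivP Γ A → FDerivP Γ (.neg (.neg A))
  | dnE : FDerivP Γ (.neg (.neg A)) → FDerivP Γ A
  | allI' : FDerivP Γ (subst x (Sum.inr c) A) → ¬ cOcc c A →
      (∀ G ∈ Γ, ¬ cOcc c G) → FDerivP Γ (.all x A)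
  | allE : FDerivP Γ (.all x A) → FDerivP Γ (subst x (Sum.inr c) A)
  | exI : FDerivP Γ (subst x (Sum.inr c) A) → FDerivP Γ (.ex x A)
  | exE : FDerivP Γ (.ex x A) → FDerivP (insert (subst x (Sum.inr c) A) Γ) C →
      ¬ cOcc c A → ¬ cOcc c C → (∀ G ∈ Γ, ¬ cOcc c G) → FDerivP Γ C
  | negAllI : FDerivP Γ (.neg (subst x (Sum.inr c) A)) → FDerivP Γ (.neg (.all x A))
  | negAllE : FDerivP Γ (.neg (.all x A)) → FDerivP (insert (.neg (subst x (Sum.inr c) A)) Γ) C →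
      ¬ cOcc c A → ¬ cOcc c C → (∀ G ∈ Γ, ¬ cOcc c G) → FDerivP Γ C
  | negExI : FDerivP Γ (.neg (subst x (Sum.inr c) A)) → ¬ cOcc c A →
      (∀ G ∈ Γ, ¬ cOcc c G) → FDerivP Γ (.neg (.ex x A))
  | negExE : FDerivP Γ (.neg (.ex x A)) → FDerivP Γ (.neg (subst x (Sum.inr c) A))
  | eqI : FDerivP Γ (.eq (Sum.inr c) (Sum.inr c))
  | eqE : FDerivP Γ (.eq (Sum.inr c₁) (Sum.inr c₂)) →
      FDerivP Γ (subst x (Sum.inr c₁) A) → FDerivP Γ (subst x (Sum.inr c₂) A)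

end S17

/-! QFDE′ is sound for an open-set semantics: a formula denotes a pair of open subsets of a
topological space (where it is true, where it is false), the connectives act pointwise, and the
truth of `∀xA` is the interior of the intersection of the truth sets of its instances. The
freshness conditions on the eigenconstant are what make ∀I′, ∃E, ¬∀E and ¬∃I sound.

In this semantics the constant-domain law fails. Over ℝ, let `B` be true off `0` and `A(n)` true
on the ball of radius `1/(n+1)` around `0`. Every `B ∨ A(n)` is true everywhere, but at `0`
neither `B` nor `∀xA` is true, since the balls intersect in `{0}`, which has empty interior.
In the two-valued semantics the law holds by a case split on the truth of `B`. -/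

namespace QLETF

variable {K K' : Type}

@[simp]
theorem fv_map (f : K → K') (A : Fm K) : fv (A.map f) = fv A := by
  induction A with
  | pred n ts => ext y; simp [fv, Fm.map]
  | eq a b => ext y; cases a <;> cases b <;> simp [fv, Fm.map]
  | _ => simp_all [fv, Fm.map]

theorem substT_eq_self {x : ℕ} {t s : ℕ ⊕ K} (hs : s ≠ .inl x) : substT x t s = s := by
  cases s <;> simp_all [substT]

theorem subst_eq_self {x : ℕ} {t : ℕ ⊕ K} {A : Fm K} (hx : x ∉ fv A) : subst x t A = A := by
  induction A with
  | pred n ts =>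
    have hts : ∀ s ∈ ts, substT x t s = s := fun s hs =>
      substT_eq_self (by rintro rfl; exact hx hs)
    simp only [subst, List.map_congr_left hts, List.map_id']
  | eq a b => simp_all [fv, subst, substT_eq_self]
  | all y A ih | ex y A ih =>
    by_cases h : y = x
    · simp [subst, h]
    · simp only [subst, if_neg h]
      exact congrArg _ (ih fun hA => hx ⟨hA, Ne.symm h⟩)
  | _ => simp_all [fv, subst]

theorem substT_inr_eq_inl {x y : ℕ} {c : K} {s : ℕ ⊕ K} :
    substT x (.inr c) s = .inl y ↔ s = .inl y ∧ y ≠ x := by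
  rcases s with z | d <;> grind [substT]

theorem fv_subst_subset (x : ℕ) (c : K) (A : Fm K) : fv (subst x (.inr c) A) ⊆ fv A \ {x} := by
  intro y
  induction A with
  | pred n ts => simp [subst, fv, substT_inr_eq_inl]
  | eq a b => simp [subst, fv, substT_inr_eq_inl]; tauto
  | all z A ih | ex z A ih =>
    by_cases h : z = x
    · subst h; simp [subst, fv]
    · simp only [subst, if_neg h, fv]; simp_all
  | conj A B ihA ihB | disj A B ihA ihB => simp only [subst, fv] at *; grind
  | _ => simp_all [subst, fv]

theorem closed_subst_of_fv_subset {x : ℕ} {A : Fm K} (hA : fv A ⊆ {x}) (c : K) :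
    Closed (subst x (.inr c) A) :=
  Set.subset_eq_empty ((fv_subst_subset x c A).trans fun _ hy => hy.2 (hA hy.1)) rfl

end QLETF

namespace FDE
open QLETF Set

theorem semConsF_all_disj {C : Type} (cond : ∀ D : Type, Struc C D → Prop) {B A : Fm C}
    {x : ℕ} (hxB : x ∉ fv B) (hclosed : Closed (.all x (.disj B A))) :
    SemConsF cond {.all x (.disj B A)} (.disj B (.all x A)) := by
  intro D S v _ _ hv hΓ
  have hfv : fv B ∪ fv A ⊆ {x} := by simpa [Closed, fv, sdiff_eq_empty] using hclosed
  set B' := B.map (Sum.inl : C → C ⊕ D)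
  set A' := A.map (Sum.inl : C → C ⊕ D)
  have hB' : Closed B' := by
    simpa [Closed, B', eq_empty_iff_forall_notMem] using fun y hy => hxB (hfv (.inl hy) ▸ hy)
  have hA' : fv A' ⊆ {x} := by simpa [A'] using subset_union_right.trans hfv
  have hinst (d : D) : v B' = true ∨ v (subst x (.inr (.inr d)) A') = true := by
    have := (hv.allC x (.disj B' A') (union_subset (hB' ▸ empty_subset _) hA')).mp (hΓ _ rfl) d
    rwa [subst, subst_eq_self (hB' ▸ notMem_empty x),
      hv.orC _ _ hB' (closed_subst_of_fv_subset hA' _)] at this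
  show v (.disj B' (.all x A')) = true
  rw [hv.orC _ _ hB' (by simpa [Closed, fv, sdiff_eq_empty] using hA'), hv.allC x A' hA']
  exact (em (v B' = true)).imp_right fun hb d => (hinst d).resolve_left hb

end FDE

namespace S17
open QLETF FDE Function Set Metric Topology

structure OpenInterp (M X : Type*) [TopologicalSpace X] where
  ext : ℕ → List M → Set X
  anti : ℕ → List M → Set X
  isOpen_ext : ∀ n ms, IsOpen (ext n ms)
  isOpen_anti : ∀ n ms, IsOpen (anti n ms)

namespace OpenInterp

variable {K : Type} [DecidableEq K] {M X : Type*} [TopologicalSpace X] (I : OpenInterp M X)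

/-- Only the truth of `∀` and the falsity of `∃` need an interior to remain open. QFDE′ has no
rules for `∘` and `•`, so their value is immaterial. -/
def val : Fm K → (ℕ ⊕ K → M) → Set X × Set X
  | .pred n ts, ι => (I.ext n (ts.map ι), I.anti n (ts.map ι))
  | .eq a b, ι => ({_p | ι a = ι b}, ∅)
  | .neg A, ι => (val A ι).swap
  | .conj A B, ι => ((val A ι).1 ∩ (val B ι).1, (val A ι).2 ∪ (val B ι).2)
  | .disj A B, ι => ((val A ι).1 ∪ (val B ι).1, (val A ι).2 ∩ (val B ι).2)
  | .cl _, _ => (∅, ∅)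
  | .ncl _, _ => (∅, ∅)
  | .all x A, ι =>
    (interior (⋂ d, (val A (update ι (.inl x) d)).1), ⋃ d, (val A (update ι (.inl x) d)).2)
  | .ex x A, ι =>
    (⋃ d, (val A (update ι (.inl x) d)).1, interior (⋂ d, (val A (update ι (.inl x) d)).2))

theorem isOpen_val (A : Fm K) (ι : ℕ ⊕ K → M) :
    IsOpen (I.val A ι).1 ∧ IsOpen (I.val A ι).2 := by
  induction A generalizing ι with
  | pred n ts => exact ⟨I.isOpen_ext _ _, I.isOpen_anti _ _⟩
  | eq a b => exact ⟨isOpen_const, isOpen_empty⟩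
  | neg A ih => exact (ih ι).symm
  | conj A B ihA ihB => exact ⟨(ihA ι).1.inter (ihB ι).1, (ihA ι).2.union (ihB ι).2⟩
  | disj A B ihA ihB => exact ⟨(ihA ι).1.union (ihB ι).1, (ihA ι).2.inter (ihB ι).2⟩
  | cl | ncl => exact ⟨isOpen_empty, isOpen_empty⟩
  | all x A ih => exact ⟨isOpen_interior, isOpen_iUnion fun d => (ih _).2⟩
  | ex x A ih => exact ⟨isOpen_iUnion fun d => (ih _).1, isOpen_interior⟩

theorem val_update_of_not_cOcc {c : K} {A : Fm K} (hc : ¬ cOcc c A) (ι : ℕ ⊕ K → M)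
    (d : M) : I.val A (update ι (.inr c) d) = I.val A ι := by
  induction A generalizing ι with
  | pred n ts =>
    have hts : ts.map (update ι (.inr c) d) = ts.map ι :=
      List.map_congr_left fun t ht => update_of_ne (by rintro rfl; exact hc ht) d ι
    simp only [val, hts]
  | eq a b =>
    simp only [cOcc, not_or] at hc
    simp only [val, update_of_ne hc.1, update_of_ne hc.2]
  | all x A ih | ex x A ih =>
    simp only [val, update_comm (Sum.inl_ne_inr (a := x) (b := c)).symm, ih hc]
  | _ => simp_all [cOcc, val]

theorem apply_substT_inr (ι : ℕ ⊕ K → M) (x : ℕ) (c : K) (t : ℕ ⊕ K) :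
    ι (substT x (.inr c) t) = update ι (.inl x) (ι (.inr c)) t := by
  rcases t with y | d
  · by_cases h : y = x <;> simp [substT, h]
  · simp [substT]

theorem val_subst (x : ℕ) (c : K) (A : Fm K) (ι : ℕ ⊕ K → M) :
    I.val (subst x (.inr c) A) ι = I.val A (update ι (.inl x) (ι (.inr c))) := by
  induction A generalizing ι with
  | pred n ts => simp [subst, val, comp_def, apply_substT_inr]
  | eq a b => simp only [subst, val, apply_substT_inr ι]
  | all y A ih | ex y A ih =>
    by_cases h : y = x
    · simp [subst, val, h]
    · have hyx : (Sum.inl y : ℕ ⊕ K) ≠ .inl x := by simpa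
      simp only [subst, if_neg h, val, ih, update_of_ne Sum.inr_ne_inl, update_comm hyx]
  | _ => simp_all [subst, val]

theorem val_subst_update_of_not_cOcc {c : K} {A : Fm K} (hc : ¬ cOcc c A) (x : ℕ)
    (ι : ℕ ⊕ K → M) (d : M) :
    I.val (subst x (.inr c) A) (update ι (.inr c) d) = I.val A (update ι (.inl x) d) := by
  rw [val_subst, update_self, update_comm Sum.inr_ne_inl, I.val_update_of_not_cOcc hc]

def valCtx (Γ : Set (Fm K)) (ι : ℕ ⊕ K → M) : Set X :=
  interior (⋂ G ∈ Γ, (I.val G ι).1)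

theorem valCtx_subset {Γ : Set (Fm K)} {G : Fm K} (hG : G ∈ Γ) (ι : ℕ ⊕ K → M) :
    I.valCtx Γ ι ⊆ (I.val G ι).1 :=
  interior_subset.trans (biInter_subset_of_mem hG)

theorem valCtx_insert (A : Fm K) (Γ : Set (Fm K)) (ι : ℕ ⊕ K → M) :
    I.valCtx (insert A Γ) ι = (I.val A ι).1 ∩ I.valCtx Γ ι := by
  rw [valCtx, biInter_insert, interior_inter, (I.isOpen_val A ι).1.interior_eq, valCtx]

theorem valCtx_update_of_not_cOcc {c : K} {Γ : Set (Fm K)} (hΓ : ∀ G ∈ Γ, ¬ cOcc c G)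
    (ι : ℕ ⊕ K → M) (d : M) : I.valCtx Γ (update ι (.inr c) d) = I.valCtx Γ ι := by
  simp only [valCtx]
  rw [iInter₂_congr fun G hG => congrArg Prod.fst (I.val_update_of_not_cOcc (hΓ G hG) ι d)]

def Entails (Γ : Set (Fm K)) (A : Fm K) : Prop :=
  ∀ ι, I.valCtx Γ ι ⊆ (I.val A ι).1

variable {I}

theorem Entails.mem_of_insert {Γ : Set (Fm K)} {A C : Fm K} (h : I.Entails (insert A Γ) C)
    {ι : ℕ ⊕ K → M} {p : X} (hp : p ∈ I.valCtx Γ ι) (hA : p ∈ (I.val A ι).1) :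
    p ∈ (I.val C ι).1 :=
  h ι (by rw [valCtx_insert]; exact ⟨hA, hp⟩)

theorem Entails.valCtx_subset_interior_iInter {Γ : Set (Fm K)} {x : ℕ} {c : K} {A : Fm K}
    (h : I.Entails Γ (subst x (.inr c) A)) (hA : ¬ cOcc c A) (hΓ : ∀ G ∈ Γ, ¬ cOcc c G)
    (ι : ℕ ⊕ K → M) :
    I.valCtx Γ ι ⊆ interior (⋂ d, (I.val A (update ι (.inl x) d)).1) := by
  refine interior_maximal (subset_iInter fun d => ?_) isOpen_interior
  simpa only [valCtx_update_of_not_cOcc _ hΓ, val_subst_update_of_not_cOcc _ hA]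
    using h (update ι (.inr c) d)

theorem Entails.mem_of_mem_iUnion {Γ : Set (Fm K)} {x : ℕ} {c : K} {A C : Fm K}
    (h : I.Entails (insert (subst x (.inr c) A) Γ) C) (hA : ¬ cOcc c A) (hC : ¬ cOcc c C)
    (hΓ : ∀ G ∈ Γ, ¬ cOcc c G) {ι : ℕ ⊕ K → M} {p : X} (hp : p ∈ I.valCtx Γ ι)
    (hd : p ∈ ⋃ d, (I.val A (update ι (.inl x) d)).1) : p ∈ (I.val C ι).1 := by
  obtain ⟨d, hd⟩ := mem_iUnion.1 hd
  have := h (update ι (.inr c) d)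
  rw [valCtx_insert, valCtx_update_of_not_cOcc _ hΓ, val_subst_update_of_not_cOcc _ hA,
    val_update_of_not_cOcc _ hC] at this
  exact this ⟨hd, hp⟩

theorem Entails.subst_of_all {Γ : Set (Fm K)} {x : ℕ} {A : Fm K} (h : I.Entails Γ (.all x A))
    (c : K) : I.Entails Γ (subst x (.inr c) A) := fun ι => by
  rw [val_subst]
  exact (h ι).trans (interior_subset.trans (iInter_subset _ _))

theorem Entails.ex_of_subst {Γ : Set (Fm K)} {x : ℕ} {c : K} {A : Fm K}
    (h : I.Entails Γ (subst x (.inr c) A)) : I.Entails Γ (.ex x A) := fun ι => by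
  have := h ι
  rw [val_subst] at this
  exact this.trans (subset_iUnion (fun d => (I.val A (update ι (.inl x) d)).1) _)

end OpenInterp

theorem FDerivP.entails {K : Type} [DecidableEq K] {M X : Type*} [TopologicalSpace X]
    {Γ : Set (Fm K)} {A : Fm K} (h : FDerivP Γ A) (I : OpenInterp M X) : I.Entails Γ A := by
  induction h with
  | hyp hA => exact I.valCtx_subset hA
  | andI _ _ ih₁ ih₂ => exact fun ι => subset_inter (ih₁ ι) (ih₂ ι)
  | andE1 _ ih | negOrE1 _ ih => exact fun ι => (ih ι).trans inter_subset_left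
  | andE2 _ ih | negOrE2 _ ih => exact fun ι => (ih ι).trans inter_subset_right
  | orI1 _ ih | negAndI1 _ ih => exact fun ι => (ih ι).trans subset_union_left
  | orI2 _ ih | negAndI2 _ ih => exact fun ι => (ih ι).trans subset_union_right
  | orE _ _ _ ih ihA ihB | negAndE _ _ _ ih ihA ihB =>
    exact fun ι p hp => (ih ι hp).elim (ihA.mem_of_insert hp) (ihB.mem_of_insert hp)
  | negOrI _ _ ih₁ ih₂ => exact fun ι => subset_inter (ih₁ ι) (ih₂ ι)
  | dnI _ ih | dnE _ ih => exact ih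
  | allI' _ hA hΓ ih => exact ih.valCtx_subset_interior_iInter hA hΓ
  | negExI _ hA hΓ ih => exact ih.valCtx_subset_interior_iInter (A := .neg _) hA hΓ
  | allE _ ih => exact ih.subst_of_all _
  | negExE _ ih => exact ih.subst_of_all (A := .neg _) _
  | exI _ ih => exact ih.ex_of_subst
  | negAllI _ ih => exact ih.ex_of_subst (A := .neg _)
  | exE _ _ hA hC hΓ ih ihC => exact fun ι p hp => ihC.mem_of_mem_iUnion hA hC hΓ hp (ih ι hp)
  | negAllE _ _ hA hC hΓ ih ihC =>
    exact fun ι p hp => ihC.mem_of_mem_iUnion (A := .neg _) hA hC hΓ hp (ih ι hp)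
  | eqI => exact fun _ _ _ => rfl
  | eqE _ _ ih₁ ih₂ =>
    intro ι p hp
    have := ih₂ ι hp
    rwa [I.val_subst, ih₁ ι hp, ← I.val_subst] at this

noncomputable def shrinkingBalls : OpenInterp ℕ ℝ where
  ext
    | 0, [] => {0}ᶜ
    | 1, [d] => ball 0 (d + 1)⁻¹
    | _, _ => ∅
  anti _ _ := ∅
  isOpen_ext n ms := by
    split
    exacts [isOpen_compl_singleton, isOpen_ball, isOpen_empty]
  isOpen_anti _ _ := isOpen_empty

theorem interior_iInter_ball_inv_succ {E : Type*} [MetricSpace E] (x : E)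
    [(𝓝[≠] x).NeBot] : interior (⋂ n : ℕ, ball x (n + 1)⁻¹) = ∅ := by
  have := biInter_basis_nhds (nhds_basis_ball_inv_nat_succ (x := x))
  simp only [iInter_true, one_div] at this
  rw [this, interior_singleton]

theorem not_entails_all_disj_shrinkingBalls :
    ¬ shrinkingBalls.Entails {(Fm.all 0 (.disj (.pred 0 []) (.pred 1 [.inl 0])) : Fm ℕ)}
      (.disj (.pred 0 []) (.all 0 (.pred 1 [.inl 0]))) := by
  intro h
  have hcover (n : ℕ) : {(0 : ℝ)}ᶜ ∪ ball 0 (n + 1)⁻¹ = univ :=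
    eq_univ_of_forall fun p =>
      (em (p = 0)).elim (fun hp => .inr (hp ▸ mem_ball_self (by positivity))) .inl
  have hyp : shrinkingBalls.valCtx
      ({Fm.all 0 (.disj (.pred 0 []) (.pred 1 [.inl 0]))} : Set (Fm ℕ)) (fun _ => 0) = univ := by
    simp [OpenInterp.valCtx, OpenInterp.val, shrinkingBalls, hcover]
  have := h _ (hyp ▸ mem_univ (0 : ℝ))
  simp [OpenInterp.val, shrinkingBalls, interior_iInter_ball_inv_succ (0 : ℝ)] at this

/-- The rule ∀I′ does not suffice: there are `B`, `A` with `x` not free in `B`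
such that `∀x(B ∨ A) ⊢ B ∨ ∀xA` is semantically valid in the standard
extension/anti-extension semantics of quantified FDE, but is not derivable in
QFDE′; hence QFDE′ is incomplete with respect to that semantics. -/
theorem qfde_prime_incomplete :
    ∃ (B A : Fm ℕ) (x : ℕ), clFree B ∧ clFree A ∧ x ∉ fv B ∧
      Closed (Fm.all x (.disj B A)) ∧
      SemConsF (fun _ _ => True) {Fm.all x (.disj B A)} (.disj B (.all x A)) ∧
      ¬ FDerivP ({Fm.all x (.disj B A)} : Set (Fm ℕ)) (.disj B (.all x A)) := by
  have hxB : 0 ∉ fv (.pred 0 [] : Fm ℕ) := by simp [fv]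
  have hclosed : Closed (Fm.all 0 (.disj (.pred 0 []) (.pred 1 [.inl 0])) : Fm ℕ) := by
    simp [Closed, fv]
  exact ⟨.pred 0 [], .pred 1 [.inl 0], 0, trivial, trivial, hxB, hclosed,
    semConsF_all_disj _ hxB hclosed,
    fun h => not_entails_all_disj_shrinkingBalls (h.entails shrinkingBalls)⟩

end S17
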